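/- arXiv:2004.04033 — 2 statements merged into one kernel-verified Lean document; each statement's English description precedes it below -/
import Mathlib

section
/- Let K ≥ 2, p, θ ∈ [0,1] with λ := θ(Kp-1)/(K-1) ≠ 1, and A as above. For j ∈ {2,...,K}, define the row vector u_j with entries u_j[i] = (1-p)/((K-1)(1-λ)) for i ≠ j and u_j[j] = ((K-1)λ - (K-2) - p)/((K-1)(1-λ)). Then u_jᵀ A = λ u_jᵀ, i.e. u_j is a left eigenvector of A with eigenvalue λ. -/
/-!
Every column of the urn matrix sums to `1`, and a row `j ≠ 0` is the constant `(1 - p)/(K - 1)`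
except on the diagonal. Writing `u_j = b • 1 + (a - b) • e_j`, the product `u_j A` is therefore
`b • 1 + (a - b) • A_j`, and the eigenvector equation reduces to one scalar identity at `i = j`
and one at `i ≠ j`.
-/

/-- Mean replacement matrix of the generalized Pólya urn associated with the
multidimensional elephant random walk with random tendency. -/
noncomputable def urnMatrix (K : ℕ) (p θ : ℝ) : Matrix (Fin K) (Fin K) ℝ :=
  Matrix.of fun i j =>
    if i.val = 0 then (if j.val = 0 then p else p + θ * ((1 - K * p) / (K - 1)))
    else if j.val = 0 then (1 - p) / (K - 1)
    else if i = j then (1 - p - θ * (1 - K * p)) / (K - 1)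
    else (1 - p) / (K - 1)

theorem Matrix.vecMul_ite_eq {m n R : Type*} [Fintype m] [DecidableEq m] [Ring R]
    (M : Matrix m n R) (j : m) (a b : R) :
    Matrix.vecMul (fun i => if i = j then a else b) M
      = fun k => b * ∑ i, M i k + (a - b) * M j k := by
  funext k
  have hsplit : ∀ i, (if i = j then a else b) * M i k
      = b * M i k + if i = j then (a - b) * M j k else 0 := by
    intro i
    split_ifs with h
    · subst h; noncomm_ring
    · simp
  simp only [Matrix.vecMul, dotProduct, hsplit, Finset.sum_add_distrib, Finset.mul_sum,
    Finset.sum_ite_eq', Finset.mem_univ, if_true]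

theorem urnMatrix_apply_of_val_ne_zero (K : ℕ) (p θ : ℝ) {j : Fin K} (hj : j.val ≠ 0)
    (k : Fin K) :
    urnMatrix K p θ j k
      = if k = j then (1 - p - θ * (1 - K * p)) / (K - 1) else (1 - p) / (K - 1) := by
  by_cases hk : k.val = 0
  · have hkj : k ≠ j := fun h => hj (h ▸ hk)
    simp [urnMatrix, hj, hk, hkj]
  · simp [urnMatrix, hj, hk, eq_comm]

theorem urnMatrix_col_sum_eq_one (K : ℕ) (hK : 2 ≤ K) (p θ : ℝ) (k : Fin K) :
    ∑ i, urnMatrix K p θ i k = 1 := by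
  obtain ⟨m, rfl⟩ : ∃ m, K = m + 2 := ⟨K - 2, by omega⟩
  have hm : ((m + 2 : ℕ) : ℝ) - 1 = m + 1 := by push_cast; ring
  have hrow (i : Fin (m + 1)) :=
    urnMatrix_apply_of_val_ne_zero (m + 2) p θ (j := i.succ) (by simp) k
  rw [Fin.sum_univ_succ]
  simp only [hrow, hm]
  cases k using Fin.cases with
  | zero =>
    simp only [urnMatrix, Matrix.of_apply, Fin.val_zero, if_true,
      (Fin.succ_ne_zero _).symm, if_false, Finset.sum_const, Finset.card_univ,
      Fintype.card_fin, nsmul_eq_mul]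
    push_cast
    field_simp
    ring
  | succ k =>
    simp only [urnMatrix, Matrix.of_apply, Fin.val_zero, if_true, Fin.val_succ,
      Nat.add_one_ne_zero, if_false, Fin.succ_inj, hm]
    rw [Fin.sum_univ_succAbove _ k]
    simp only [if_true, (Fin.succAbove_ne k _).symm, if_false, Finset.sum_const,
      Finset.card_univ, Fintype.card_fin, nsmul_eq_mul]
    push_cast
    field_simp
    ring

theorem urnMatrix_left_eigenvector_uj_general (K : ℕ) (hK : 2 ≤ K) (p θ : ℝ)
    (hlam : θ * ((K * p - 1) / (K - 1)) ≠ 1)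
    (j : Fin K) (hj : j.val ≠ 0) :
    Matrix.vecMul
        (fun i => (if i = j then (K - 1) * (θ * ((K * p - 1) / (K - 1))) - (K - 2) - p
            else 1 - p) / ((K - 1) * (1 - θ * ((K * p - 1) / (K - 1)))))
        (urnMatrix K p θ)
      = (θ * ((K * p - 1) / (K - 1))) •
        (fun i => (if i = j then (K - 1) * (θ * ((K * p - 1) / (K - 1))) - (K - 2) - p
            else 1 - p) / ((K - 1) * (1 - θ * ((K * p - 1) / (K - 1))))) := by
  have hK1 : (K : ℝ) - 1 ≠ 0 := by
    have : (2 : ℝ) ≤ K := by exact_mod_cast hK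
    linarith
  have hgap : (K : ℝ) - 1 - θ * (K * p - 1) ≠ 0 := by
    rwa [ne_eq, sub_eq_zero, eq_comm, ← div_eq_one_iff_eq hK1, mul_div_assoc]
  simp only [ite_div, Matrix.vecMul_ite_eq, urnMatrix_col_sum_eq_one K hK,
    urnMatrix_apply_of_val_ne_zero K p θ hj]
  funext k
  rw [Pi.smul_apply, smul_eq_mul]
  split_ifs <;> field_simp <;> ring

/-- For `j ≠ 1`, the row vector `u_j` is a left eigenvector of the mean
replacement matrix with eigenvalue `λ = θ(Kp-1)/(K-1)`. -/
theorem urnMatrix_left_eigenvector_uj (K : ℕ) (hK : 2 ≤ K) (p θ : ℝ)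
    (hp : p ∈ Set.Icc (0 : ℝ) 1) (hθ : θ ∈ Set.Icc (0 : ℝ) 1)
    (hlam : θ * ((K * p - 1) / (K - 1)) ≠ 1)
    (j : Fin K) (hj : j.val ≠ 0) :
    Matrix.vecMul
        (fun i => (if i = j then (K - 1) * (θ * ((K * p - 1) / (K - 1))) - (K - 2) - p
            else 1 - p) / ((K - 1) * (1 - θ * ((K * p - 1) / (K - 1)))))
        (urnMatrix K p θ)
      = (θ * ((K * p - 1) / (K - 1))) •
        (fun i => (if i = j then (K - 1) * (θ * ((K * p - 1) / (K - 1))) - (K - 2) - p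
            else 1 - p) / ((K - 1) * (1 - θ * ((K * p - 1) / (K - 1))))) :=
  urnMatrix_left_eigenvector_uj_general K hK p θ hlam j hj
end

section
/- Let K ≥ 2, p, θ ∈ [0,1], λ = θ(Kp-1)/(K-1) ≠ 1. Define B = (1/((K-1)+θ(1-Kp))) · diag(p(K-1)+θ(1-Kp), 1-p, ..., 1-p) (a K×K diagonal matrix), and let u_i (i = 2,...,K) be the left eigenvectors defined above. Then for i, j ∈ {2,...,K}: u_iᵀ B u_j = ((1-p)/((K-1)²(1-λ)²))·(p-1) if i ≠ j, and u_iᵀ B u_i = ((1-p)/((K-1)²(1-λ)²))·(p-1+(K-1)(1-λ)). -/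
/-!
Writing `λ = θ(Kp-1)/(K-1)` and `D = (K-1)(1-λ)`, each left eigenvector is a constant vector minus
a basis vector, `u_a = ((1-p)/D)·𝟙 - e_a`, and `D·B` is diagonal with trace `D`. Expanding the
bilinear form of a diagonal matrix on such vectors leaves only the trace, the two diagonal entries
`1-p` at `i` and `j`, and a Kronecker delta.
-/

open Matrix

theorem dotProduct_diagonal_mulVec_const_sub_single {ι R : Type*} [Fintype ι] [DecidableEq ι]
    [CommRing R] (w : ι → R) (s : R) (i j : ι) :
    (Function.const ι s - Pi.single i 1) ⬝ᵥ
        (diagonal w *ᵥ (Function.const ι s - Pi.single j 1)) =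
      s ^ 2 * ∑ k, w k - s * (w i + w j) + if i = j then w i else 0 := by
  have hterm : ∀ k, (s - (Pi.single i 1 : ι → R) k) * (w k * (s - (Pi.single j 1 : ι → R) k)) =
      s ^ 2 * w k - s * (if k = i then w k else 0) - s * (if k = j then w k else 0)
        + if k = i then (if i = j then w k else 0) else 0 := by
    intro k
    by_cases hik : k = i <;> by_cases hjk : k = j <;> subst_vars <;> simp [*] <;> ring
  simp only [dotProduct, mulVec_diagonal, Pi.sub_apply, Function.const_apply, hterm,
    Finset.sum_add_distrib, Finset.sum_sub_distrib, ← Finset.mul_sum, Finset.sum_ite_eq',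
    Finset.mem_univ, if_true]
  ring

theorem Fin.sum_ite_val_eq_zero {M : Type*} [AddCommMonoid M] (n : ℕ) (a b : M) :
    ∑ k : Fin (n + 1), (if k.val = 0 then a else b) = a + n • b := by
  simp [Fin.sum_univ_succ]

theorem quadratic_forms_uBu_general (K : ℕ) (p θ : ℝ)
    (hlam : θ * ((K * p - 1) / (K - 1)) ≠ 1)
    (u : Fin K → Fin K → ℝ)
    (hu : ∀ a i, u a i =
      (if i = a then (K - 1) * (θ * ((K * p - 1) / (K - 1))) - (K - 2) - p
        else 1 - p) / ((K - 1) * (1 - θ * ((K * p - 1) / (K - 1)))))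
    (B : Matrix (Fin K) (Fin K) ℝ)
    (hB : B = ((K : ℝ) - 1 + θ * (1 - K * p))⁻¹ •
      Matrix.diagonal (fun i : Fin K =>
        if i.val = 0 then p * (K - 1) + θ * (1 - K * p) else 1 - p)) :
    ∀ i j : Fin K, i.val ≠ 0 → j.val ≠ 0 →
      dotProduct (u i) (B.mulVec (u j)) =
        if i = j then
          (1 - p) / ((K - 1) ^ 2 * (1 - θ * ((K * p - 1) / (K - 1))) ^ 2) *
            (p - 1 + (K - 1) * (1 - θ * ((K * p - 1) / (K - 1))))
        else
          (1 - p) / ((K - 1) ^ 2 * (1 - θ * ((K * p - 1) / (K - 1))) ^ 2) * (p - 1) := by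
  intro i j hi hj
  have hK : (K : ℝ) - 1 ≠ 0 := by
    have : 2 ≤ K := lt_of_le_of_lt (Nat.one_le_iff_ne_zero.mpr hi) i.isLt
    rw [sub_ne_zero, ← Nat.cast_one, Ne, Nat.cast_inj]
    omega
  set L := θ * ((K * p - 1) / (K - 1)) with hL
  set D := ((K : ℝ) - 1) * (1 - L) with hD
  have hD0 : D ≠ 0 := mul_ne_zero hK (sub_ne_zero.mpr (Ne.symm hlam))
  set w : Fin K → ℝ := fun k => if k.val = 0 then p * (K - 1) + θ * (1 - K * p) else 1 - p
  have hu_eq : ∀ a, u a = Function.const _ ((1 - p) / D) - Pi.single a 1 := by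
    intro a
    funext k
    rw [hu, Pi.sub_apply, Function.const_apply, Pi.single_apply]
    split_ifs
    · field_simp; ring
    · ring
  have hB_eq : B = D⁻¹ • diagonal w := by
    rw [hB, hD, hL]; congr 2; field_simp; ring
  have htrace : ∑ k, w k = D := by
    obtain ⟨n, rfl⟩ : ∃ n, K = n + 1 := Nat.exists_eq_succ_of_ne_zero (by omega)
    rw [Fin.sum_ite_val_eq_zero, nsmul_eq_mul, hD, hL]
    push_cast at hK ⊢
    rw [add_sub_cancel_right] at hK ⊢
    field_simp
    ring
  rw [hB_eq, hu_eq, hu_eq, smul_mulVec, dotProduct_smul,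
    dotProduct_diagonal_mulVec_const_sub_single, htrace]
  simp only [w, if_neg hi, if_neg hj, smul_eq_mul]
  split_ifs <;> field_simp <;> ring

/-- Quadratic forms `u_iᵀ B u_j` of the matrix
`B = (1/((K-1)+θ(1-Kp)))·diag(p(K-1)+θ(1-Kp), 1-p, …, 1-p)` against the left
eigenvectors `u_i` (`i ≥ 2`): they equal `((1-p)/((K-1)²(1-λ)²))·(p-1)` for
`i ≠ j` and `((1-p)/((K-1)²(1-λ)²))·(p-1+(K-1)(1-λ))` for `i = j`,
with `λ = θ(Kp-1)/(K-1)`. -/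
theorem quadratic_forms_uBu (K : ℕ) (hK : 2 ≤ K) (p θ : ℝ)
    (hp : p ∈ Set.Icc (0 : ℝ) 1) (hθ : θ ∈ Set.Icc (0 : ℝ) 1)
    (hlam : θ * ((K * p - 1) / (K - 1)) ≠ 1)
    (u : Fin K → Fin K → ℝ)
    (hu : ∀ a i, u a i =
      (if i = a then (K - 1) * (θ * ((K * p - 1) / (K - 1))) - (K - 2) - p
        else 1 - p) / ((K - 1) * (1 - θ * ((K * p - 1) / (K - 1)))))
    (B : Matrix (Fin K) (Fin K) ℝ)
    (hB : B = ((K : ℝ) - 1 + θ * (1 - K * p))⁻¹ •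
      Matrix.diagonal (fun i : Fin K =>
        if i.val = 0 then p * (K - 1) + θ * (1 - K * p) else 1 - p)) :
    ∀ i j : Fin K, i.val ≠ 0 → j.val ≠ 0 →
      dotProduct (u i) (B.mulVec (u j)) =
        if i = j then
          (1 - p) / ((K - 1) ^ 2 * (1 - θ * ((K * p - 1) / (K - 1))) ^ 2) *
            (p - 1 + (K - 1) * (1 - θ * ((K * p - 1) / (K - 1))))
        else
          (1 - p) / ((K - 1) ^ 2 * (1 - θ * ((K * p - 1) / (K - 1))) ^ 2) * (p - 1) :=
  quadratic_forms_uBu_general K p θ hlam u hu B hB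
end
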